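/- The structure functional S(f) := EMD(f⁺, f⁻), where f⁺ = max(f − μ, 0), f⁻ = max(μ − f, 0), and μ is the mean of f over Ω, is a semi-norm on L¹(Ω): it is nonnegative, absolutely homogeneous (S(λf) = |λ|S(f) for all λ ∈ ℝ), and satisfies the triangle inequality S(f+g) ≤ S(f) + S(g). -/

import Mathlib

open MeasureTheory

noncomputable def densityMeasure {d : ℕ} (Ω : Set (EuclideanSpace ℝ (Fin d)))
    (f : EuclideanSpace ℝ (Fin d) → ℝ) : Measure (EuclideanSpace ℝ (Fin d)) :=
  (volume.restrict Ω).withDensity (fun x => ENNReal.ofReal (f x))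

noncomputable def EMD {d : ℕ} (Ω : Set (EuclideanSpace ℝ (Fin d)))
    (f g : EuclideanSpace ℝ (Fin d) → ℝ) : ℝ :=
  sInf ((fun π : Measure (EuclideanSpace ℝ (Fin d) × EuclideanSpace ℝ (Fin d)) =>
      ∫ p, dist p.1 p.2 ∂π) ''
    {π | π.fst = densityMeasure Ω f ∧ π.snd = densityMeasure Ω g})

noncomputable def meanOn {d : ℕ} (Ω : Set (EuclideanSpace ℝ (Fin d)))
    (f : EuclideanSpace ℝ (Fin d) → ℝ) : ℝ := ⨍ x in Ω, f x

noncomputable def struc {d : ℕ} (Ω : Set (EuclideanSpace ℝ (Fin d)))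
    (f : EuclideanSpace ℝ (Fin d) → ℝ) : ℝ :=
  EMD Ω (fun x => max (f x - meanOn Ω f) 0) (fun x => max (meanOn Ω f - f x) 0)

set_option linter.unusedSectionVars false

section DiscretePart
open Finset

section Discrete

variable {ι : Type*} [Fintype ι] [DecidableEq ι]

/-- elementary matrix -/
def emat (i j p q : ι) : ℝ := if p = i ∧ q = j then 1 else 0

lemma emat_row (i j p : ι) : ∑ q, emat i j p q = if p = i then 1 else 0 := by
  by_cases hp : p = i <;> simp [emat, hp]

lemma emat_col (i j q : ι) : ∑ p, emat i j p q = if q = j then 1 else 0 := by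
  by_cases hq : q = j <;> simp [emat, hq]

lemma emat_cost (d : ι → ι → ℝ) (i j : ι) :
    ∑ p, ∑ q, emat i j p q * d p q = d i j := by
  have h : ∀ p, ∑ q, emat i j p q * d p q = if p = i then d i j else 0 := by
    intro p
    by_cases hp : p = i <;> simp [emat, hp]
  simp [h]

lemma emat_apply_self (i j : ι) : emat i j i j = 1 := by simp [emat]

lemma emat_apply_ne (i j p q : ι) (h : ¬(p = i ∧ q = j)) : emat i j p q = 0 := by
  simp only [emat, if_neg h]

/-- One shortcut step at relay k. -/
lemma step_exists (d : ι → ι → ℝ)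
    (π : ι → ι → ℝ) (hπ : ∀ p q, 0 ≤ π p q)
    (i j k : ι) (hik : i ≠ k) (hjk : j ≠ k)
    (m : ℝ) (hm0 : 0 ≤ m) (hm1 : m ≤ π i k) (hm2 : m ≤ π k j) :
    ∃ π' : ι → ι → ℝ, (∀ p q, 0 ≤ π' p q) ∧
      (∀ p, ∑ q, π' p q = ∑ q, π p q - (if p = k then m else 0)) ∧
      (∀ q, ∑ p, π' p q = ∑ p, π p q - (if q = k then m else 0)) ∧
      (∑ p, ∑ q, π' p q * d p q
        = (∑ p, ∑ q, π p q * d p q) + m * (d i j - d i k - d k j)) ∧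
      π' i k = π i k - m ∧ π' k j = π k j - m ∧
      (∀ q, q ≠ j → π' k q = π k q) ∧ (∀ p, p ≠ i → π' p k = π p k) ∧
      π' k k = π k k := by
  have hki : k ≠ i := Ne.symm hik
  have hkj : k ≠ j := Ne.symm hjk
  set π' : ι → ι → ℝ :=
    fun p q => π p q + m * (emat i j p q - emat i k p q - emat k j p q) with hπ'
  have hval : ∀ p q, π' p q = π p q + m * (emat i j p q - emat i k p q - emat k j p q) :=
    fun p q => rfl
  refine ⟨π', ?_, ?_, ?_, ?_, ?_, ?_, ?_, ?_, ?_⟩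
  · intro p q
    rw [hval]
    by_cases h1 : p = i ∧ q = k
    · rw [h1.1, h1.2]
      rw [emat_apply_self, emat_apply_ne i j i k (fun h => hkj h.2),
        emat_apply_ne k j i k (fun h => hik h.1)]
      nlinarith [hπ i k]
    · by_cases h2 : p = k ∧ q = j
      · rw [h2.1, h2.2]
        rw [emat_apply_self, emat_apply_ne i j k j (fun h => hki h.1),
          emat_apply_ne i k k j (fun h => hki h.1)]
        nlinarith [hπ k j]
      · by_cases h3 : p = i ∧ q = j
        · rw [h3.1, h3.2]
          rw [emat_apply_self, emat_apply_ne i k i j (fun h => hjk h.2),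
            emat_apply_ne k j i j (fun h => hik h.1)]
          nlinarith [hπ i j]
        · rw [emat_apply_ne i j p q h3, emat_apply_ne i k p q h1, emat_apply_ne k j p q h2]
          simpa using hπ p q
  · intro p
    simp only [hval]
    rw [Finset.sum_add_distrib, ← Finset.mul_sum, Finset.sum_sub_distrib,
      Finset.sum_sub_distrib, emat_row, emat_row, emat_row]
    split_ifs <;> ring
  · intro q
    simp only [hval]
    rw [Finset.sum_add_distrib, ← Finset.mul_sum, Finset.sum_sub_distrib,
      Finset.sum_sub_distrib, emat_col, emat_col, emat_col]
    split_ifs <;> ring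
  · have hexp : ∀ p q, π' p q * d p q
        = π p q * d p q + (m * (emat i j p q * d p q)
          - m * (emat i k p q * d p q) - m * (emat k j p q * d p q)) := by
      intro p q; rw [hval]; ring
    have s1 : ∑ p, ∑ q, π' p q * d p q
        = (∑ p, ∑ q, π p q * d p q) + m * (∑ p, ∑ q, emat i j p q * d p q)
          - m * (∑ p, ∑ q, emat i k p q * d p q)
          - m * (∑ p, ∑ q, emat k j p q * d p q) := by
      simp only [hexp, Finset.sum_add_distrib, Finset.sum_sub_distrib, Finset.mul_sum]
      ring
    rw [s1, emat_cost d i j, emat_cost d i k, emat_cost d k j]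
    ring
  · rw [hval, emat_apply_self, emat_apply_ne i j i k (fun h => hkj h.2),
      emat_apply_ne k j i k (fun h => hik h.1)]
    ring
  · rw [hval, emat_apply_self, emat_apply_ne i j k j (fun h => hki h.1),
      emat_apply_ne i k k j (fun h => hki h.1)]
    ring
  · intro q hq
    rw [hval, emat_apply_ne i j k q (fun h => hki h.1),
      emat_apply_ne i k k q (fun h => hki h.1),
      emat_apply_ne k j k q (fun h => hq h.2)]
    ring
  · intro p hp
    rw [hval, emat_apply_ne i j p k (fun h => hkj h.2),
      emat_apply_ne i k p k (fun h => hp h.1), emat_apply_ne k j p k (fun h => hkj h.2)]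
    ring
  · rw [hval, emat_apply_ne i j k k (fun h => hki h.1),
      emat_apply_ne i k k k (fun h => hki h.1),
      emat_apply_ne k j k k (fun h => hkj h.2)]
    ring

end Discrete

section Discrete2

variable {ι : Type*} [Fintype ι] [DecidableEq ι]

lemma clearRelay (d : ι → ι → ℝ)
    (hdtri : ∀ i k j, d i j ≤ d i k + d k j) (k : ι) :
    ∀ N : ℕ, ∀ (π : ι → ι → ℝ) (A B : ι → ℝ) (ρ : ℝ),
    (∀ p q, 0 ≤ π p q) → (∀ p, 0 ≤ A p) → (∀ q, 0 ≤ B q) → 0 ≤ ρ →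
    (ρ ≠ 0 → π k k = 0) →
    ((univ.filter fun q => π k q ≠ 0).card + (univ.filter fun p => π p k ≠ 0).card ≤ N) →
    (∀ p, ∑ q, π p q = A p + if p = k then ρ else 0) →
    (∀ q, ∑ p, π p q = B q + if q = k then ρ else 0) →
    ∃ π' : ι → ι → ℝ, (∀ p q, 0 ≤ π' p q) ∧ (∀ p, ∑ q, π' p q = A p) ∧
      (∀ q, ∑ p, π' p q = B q) ∧
      ∑ p, ∑ q, π' p q * d p q ≤ ∑ p, ∑ q, π p q * d p q := by
  intro N
  induction N with
  | zero =>
    intro π A B ρ hπ hA hB hρ hkk hcard hrow hcol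
    by_cases hρ0 : ρ = 0
    · exact ⟨π, hπ, fun p => by simpa [hρ0] using hrow p,
        fun q => by simpa [hρ0] using hcol q, le_refl _⟩
    · exfalso
      have hρpos : 0 < ρ := lt_of_le_of_ne hρ (Ne.symm hρ0)
      have hsum : ∑ q, π k q ≠ 0 := by
        rw [hrow k, if_pos rfl]
        exact ne_of_gt (add_pos_of_nonneg_of_pos (hA k) hρpos)
      obtain ⟨j, _, hj⟩ := Finset.exists_ne_zero_of_sum_ne_zero hsum
      have : j ∈ univ.filter fun q => π k q ≠ 0 := by simp [hj]
      have h1 : 0 < (univ.filter fun q => π k q ≠ 0).card := Finset.card_pos.mpr ⟨j, this⟩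
      omega
  | succ n ih =>
    intro π A B ρ hπ hA hB hρ hkk hcard hrow hcol
    by_cases hρ0 : ρ = 0
    · exact ⟨π, hπ, fun p => by simpa [hρ0] using hrow p,
        fun q => by simpa [hρ0] using hcol q, le_refl _⟩
    have hρpos : 0 < ρ := lt_of_le_of_ne hρ (Ne.symm hρ0)
    have hkk0 : π k k = 0 := hkk hρ0
    -- find j with π k j > 0, j ≠ k
    have hsumr : ∑ q, π k q ≠ 0 := by
      rw [hrow k, if_pos rfl]
      exact ne_of_gt (add_pos_of_nonneg_of_pos (hA k) hρpos)
    obtain ⟨j, _, hj⟩ := Finset.exists_ne_zero_of_sum_ne_zero hsumr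
    have hjpos : 0 < π k j := lt_of_le_of_ne (hπ k j) (Ne.symm hj)
    have hjk : j ≠ k := by rintro rfl; exact hj hkk0
    -- find i with π i k > 0, i ≠ k
    have hsumc : ∑ p, π p k ≠ 0 := by
      rw [hcol k, if_pos rfl]
      exact ne_of_gt (add_pos_of_nonneg_of_pos (hB k) hρpos)
    obtain ⟨i, _, hi⟩ := Finset.exists_ne_zero_of_sum_ne_zero hsumc
    have hipos : 0 < π i k := lt_of_le_of_ne (hπ i k) (Ne.symm hi)
    have hik : i ≠ k := by rintro rfl; exact hi hkk0
    set m : ℝ := min (min (π i k) (π k j)) ρ with hm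
    have hmpos : 0 < m := lt_min (lt_min hipos hjpos) hρpos
    have hm1 : m ≤ π i k := le_trans (min_le_left _ _) (min_le_left _ _)
    have hm2 : m ≤ π k j := le_trans (min_le_left _ _) (min_le_right _ _)
    have hmρ : m ≤ ρ := min_le_right _ _
    obtain ⟨π₂, h2nn, h2row, h2col, h2cost, h2ik, h2kj, h2krow, h2kcol, h2kk⟩ :=
      step_exists d π hπ i j k hik hjk m (le_of_lt hmpos) hm1 hm2
    have hcostle : ∑ p, ∑ q, π₂ p q * d p q ≤ ∑ p, ∑ q, π p q * d p q := by
      rw [h2cost]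
      nlinarith [hdtri i k j, hmpos]
    by_cases hcase : m = ρ
    · refine ⟨π₂, h2nn, ?_, ?_, hcostle⟩
      · intro p
        rw [h2row p, hrow p]
        split_ifs with h
        · rw [hcase]; ring
        · ring
      · intro q
        rw [h2col q, hcol q]
        split_ifs with h
        · rw [hcase]; ring
        · ring
    · -- recurse
      have hmltρ : m < ρ := lt_of_le_of_ne hmρ hcase
      have hsub1 : (univ.filter fun q => π₂ k q ≠ 0) ⊆ (univ.filter fun q => π k q ≠ 0) := by
        intro q hq
        simp only [Finset.mem_filter, Finset.mem_univ, true_and] at hq ⊢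
        by_cases hqj : q = j
        · subst hqj; exact ne_of_gt hjpos
        · rwa [h2krow q hqj] at hq
      have hsub2 : (univ.filter fun p => π₂ p k ≠ 0) ⊆ (univ.filter fun p => π p k ≠ 0) := by
        intro p hp
        simp only [Finset.mem_filter, Finset.mem_univ, true_and] at hp ⊢
        by_cases hpi : p = i
        · subst hpi; exact ne_of_gt hipos
        · rwa [h2kcol p hpi] at hp
      have hcard2 : (univ.filter fun q => π₂ k q ≠ 0).card
          + (univ.filter fun p => π₂ p k ≠ 0).card ≤ n := by
        have hm' : m = min (π i k) (π k j) := by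
          rcases min_cases (min (π i k) (π k j)) ρ with ⟨h', _⟩ | ⟨h', _⟩
          · rw [hm]; exact h'
          · exfalso; exact hcase (hm.trans h')
        have hmin : m = π i k ∨ m = π k j := by
          rcases min_cases (π i k) (π k j) with ⟨h', _⟩ | ⟨h', _⟩
          · left; rw [hm', h']
          · right; rw [hm', h']
        rcases hmin with hmi | hmj
        · have hstrict : (univ.filter fun p => π₂ p k ≠ 0) ⊂ (univ.filter fun p => π p k ≠ 0) := by
            rw [Finset.ssubset_iff_of_subset hsub2]
            refine ⟨i, by simp [ne_of_gt hipos], ?_⟩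
            simp [h2ik, hmi]
          have c1 := Finset.card_le_card hsub1
          have c2 := Finset.card_lt_card hstrict
          omega
        · have hstrict : (univ.filter fun q => π₂ k q ≠ 0) ⊂ (univ.filter fun q => π k q ≠ 0) := by
            rw [Finset.ssubset_iff_of_subset hsub1]
            refine ⟨j, by simp [ne_of_gt hjpos], ?_⟩
            simp [h2kj, hmj]
          have c1 := Finset.card_le_card hsub2
          have c2 := Finset.card_lt_card hstrict
          omega
      obtain ⟨π₃, h3nn, h3row, h3col, h3cost⟩ :=
        ih π₂ A B (ρ - m) h2nn hA hB (by linarith) (fun _ => h2kk.trans hkk0) hcard2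
          (fun p => by rw [h2row p, hrow p]; split_ifs with h <;> ring)
          (fun q => by rw [h2col q, hcol q]; split_ifs with h <;> ring)
      exact ⟨π₃, h3nn, h3row, h3col, le_trans h3cost hcostle⟩

end Discrete2

section Discrete3

variable {ι : Type*} [Fintype ι] [DecidableEq ι]

lemma discrete_cancel_aux (d : ι → ι → ℝ)
    (hdtri : ∀ i k j, d i j ≤ d i k + d k j) :
    ∀ M : ℕ, ∀ (π : ι → ι → ℝ) (a b r : ι → ℝ),
    (∀ p q, 0 ≤ π p q) → (∀ p, 0 ≤ a p) → (∀ q, 0 ≤ b q) → (∀ p, 0 ≤ r p) →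
    (∀ p, ∑ q, π p q = a p + r p) → (∀ q, ∑ p, π p q = b q + r q) →
    (univ.filter fun p => r p ≠ 0).card ≤ M →
    ∃ γ : ι → ι → ℝ, (∀ p q, 0 ≤ γ p q) ∧ (∀ p, ∑ q, γ p q = a p) ∧
      (∀ q, ∑ p, γ p q = b q) ∧
      ∑ p, ∑ q, γ p q * d p q ≤ ∑ p, ∑ q, π p q * d p q := by
  intro M
  induction M with
  | zero =>
    intro π a b r hπ ha hb hr hrow hcol hcard
    have hr0 : ∀ p, r p = 0 := by
      intro p
      by_contra hp
      have : p ∈ univ.filter fun p => r p ≠ 0 := by simp [hp]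
      have := Finset.card_pos.mpr ⟨p, this⟩
      omega
    exact ⟨π, hπ, fun p => by simpa [hr0 p] using hrow p,
      fun q => by simpa [hr0 q] using hcol q, le_refl _⟩
  | succ M ih =>
    intro π a b r hπ ha hb hr hrow hcol hcard
    by_cases hrall : ∀ p, r p = 0
    · exact ⟨π, hπ, fun p => by simpa [hrall p] using hrow p,
        fun q => by simpa [hrall q] using hcol q, le_refl _⟩
    push_neg at hrall
    obtain ⟨k, hk⟩ := hrall
    have hkpos : 0 < r k := lt_of_le_of_ne (hr k) (Ne.symm hk)
    -- diagonal preprocessing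
    set m₀ : ℝ := min (π k k) (r k) with hm₀
    have hm₀nn : 0 ≤ m₀ := le_min (hπ k k) (hr k)
    have hm₀le : m₀ ≤ π k k := min_le_left _ _
    have hm₀ler : m₀ ≤ r k := min_le_right _ _
    set π₀ : ι → ι → ℝ := fun p q => π p q - (if p = k ∧ q = k then m₀ else 0) with hπ₀
    have hπ₀val : ∀ p q, π₀ p q = π p q - (if p = k ∧ q = k then m₀ else 0) := fun _ _ => rfl
    have hπ₀nn : ∀ p q, 0 ≤ π₀ p q := by
      intro p q
      rw [hπ₀val]
      split_ifs with h
      · rcases h with ⟨rfl, rfl⟩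
        linarith
      · simpa using hπ p q
    have hrowaux : ∀ p, ∑ q, (if p = k ∧ q = k then m₀ else 0) = if p = k then m₀ else 0 := by
      intro p
      by_cases hp : p = k <;> simp [hp]
    have hcolaux : ∀ q, ∑ p, (if p = k ∧ q = k then m₀ else 0) = if q = k then m₀ else 0 := by
      intro q
      by_cases hq : q = k <;> simp [hq]
    have hπ₀row : ∀ p, ∑ q, π₀ p q = ∑ q, π p q - (if p = k then m₀ else 0) := by
      intro p
      simp only [hπ₀val]
      rw [Finset.sum_sub_distrib, hrowaux p]
    have hπ₀col : ∀ q, ∑ p, π₀ p q = ∑ p, π p q - (if q = k then m₀ else 0) := by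
      intro q
      simp only [hπ₀val]
      rw [Finset.sum_sub_distrib, hcolaux q]
    have hπ₀cost : ∑ p, ∑ q, π₀ p q * d p q ≤ ∑ p, ∑ q, π p q * d p q := by
      have hexp : ∀ p q, π₀ p q * d p q
          = π p q * d p q - (if p = k ∧ q = k then m₀ else 0) * d p q := by
        intro p q; rw [hπ₀val]; ring
      have haux : ∀ p, ∑ q, (if p = k ∧ q = k then m₀ else 0) * d p q
          = if p = k then m₀ * d p k else 0 := by
        intro p
        by_cases hp : p = k <;> simp [hp]
      have hdkk : 0 ≤ m₀ * d k k := by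
        by_cases h : d k k ≤ 0
        · -- use triangle: d k k ≤ d k k + d k k so 0 ≤ d k k
          have := hdtri k k k
          nlinarith
        · nlinarith
      simp only [hexp, Finset.sum_sub_distrib, haux]
      have : ∑ p, (if p = k then m₀ * d p k else 0) = m₀ * d k k := by simp
      rw [this]
      linarith
    -- clear relay k
    set A : ι → ℝ := fun p => if p = k then a k else a p + r p with hA'
    set B : ι → ℝ := fun q => if q = k then b k else b q + r q with hB'
    set ρ : ℝ := r k - m₀ with hρ'
    have hρnn : 0 ≤ ρ := by simp only [hρ']; linarith
    obtain ⟨π₁, h1nn, h1row, h1col, h1cost⟩ :=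
      clearRelay d hdtri k
        ((univ.filter fun q => π₀ k q ≠ 0).card + (univ.filter fun p => π₀ p k ≠ 0).card)
        π₀ A B ρ hπ₀nn
        (fun p => by by_cases hp : p = k <;> simp [hA', hp, ha, add_nonneg (ha p) (hr p)])
        (fun q => by by_cases hq : q = k <;> simp [hB', hq, hb, add_nonneg (hb q) (hr q)])
        hρnn
        (fun hρne => by
          have hm₀eq : m₀ = π k k := by
            rcases min_cases (π k k) (r k) with ⟨h', _⟩ | ⟨h', h''⟩
            · rw [hm₀]; exact h'
            · exfalso
              apply hρne
              have : m₀ = r k := by rw [hm₀]; exact h'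
              simp only [hρ', this]
              ring
          rw [hπ₀val]
          simp [hm₀eq])
        (le_refl _)
        (fun p => by
          rw [hπ₀row p, hrow p]
          by_cases hp : p = k <;> simp [hA', hρ', hp] <;> ring)
        (fun q => by
          rw [hπ₀col q, hcol q]
          by_cases hq : q = k <;> simp [hB', hρ', hq] <;> ring)
    -- now recurse on remaining relays
    set r' : ι → ℝ := Function.update r k 0 with hr''
    have hr'k : r' k = 0 := Function.update_self k 0 r
    have hr'ne : ∀ p, p ≠ k → r' p = r p := fun p hp => Function.update_of_ne hp 0 r
    have hcard' : (univ.filter fun p => r' p ≠ 0).card ≤ M := by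
      have hsub : (univ.filter fun p => r' p ≠ 0) ⊂ (univ.filter fun p => r p ≠ 0) := by
        rw [Finset.ssubset_iff_of_subset]
        · exact ⟨k, by simp [hk], by simp [hr'k]⟩
        · intro p hp
          simp only [Finset.mem_filter, Finset.mem_univ, true_and] at hp ⊢
          by_cases hpk : p = k
          · subst hpk; exact absurd hr'k hp
          · rwa [hr'ne p hpk] at hp
      have := Finset.card_lt_card hsub
      omega
    obtain ⟨γ, hγnn, hγrow, hγcol, hγcost⟩ :=
      ih π₁ a b r' h1nn ha hb
        (fun p => by
          by_cases hp : p = k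
          · subst hp; rw [hr'k]
          · rw [hr'ne p hp]; exact hr p)
        (fun p => by
          rw [h1row p]
          by_cases hp : p = k
          · subst hp; simp [hA', hr'k]
          · simp [hA', hp, hr'ne p hp])
        (fun q => by
          rw [h1col q]
          by_cases hq : q = k
          · subst hq; simp [hB', hr'k]
          · simp [hB', hq, hr'ne q hq])
        hcard'
    exact ⟨γ, hγnn, hγrow, hγcol, le_trans hγcost (le_trans h1cost hπ₀cost)⟩

/-- Discrete mass-cancellation: a coupling of `(a+r, b+r)` dominates (in cost)
a coupling of `(a,b)`, for triangle-inequality costs. -/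
lemma discrete_cancel (d : ι → ι → ℝ)
    (hdtri : ∀ i k j, d i j ≤ d i k + d k j)
    (π : ι → ι → ℝ) (a b r : ι → ℝ)
    (hπ : ∀ p q, 0 ≤ π p q) (ha : ∀ p, 0 ≤ a p) (hb : ∀ q, 0 ≤ b q) (hr : ∀ p, 0 ≤ r p)
    (hrow : ∀ p, ∑ q, π p q = a p + r p) (hcol : ∀ q, ∑ p, π p q = b q + r q) :
    ∃ γ : ι → ι → ℝ, (∀ p q, 0 ≤ γ p q) ∧ (∀ p, ∑ q, γ p q = a p) ∧
      (∀ q, ∑ p, γ p q = b q) ∧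
      ∑ p, ∑ q, γ p q * d p q ≤ ∑ p, ∑ q, π p q * d p q :=
  discrete_cancel_aux d hdtri _ π a b r hπ ha hb hr hrow hcol (le_refl _)

end Discrete3

end DiscretePart

section Helpers

variable {d : ℕ}

local notation "E" => EuclideanSpace ℝ (Fin d)

lemma cost_nonneg (π : Measure (E × E)) : 0 ≤ ∫ p : E × E, dist p.1 p.2 ∂π :=
  integral_nonneg fun _ => dist_nonneg

lemma bddBelow_EMDset (Ω : Set E) (f g : E → ℝ) :
    BddBelow ((fun π : Measure (E × E) => ∫ p, dist p.1 p.2 ∂π) ''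
      {π | π.fst = densityMeasure Ω f ∧ π.snd = densityMeasure Ω g}) := by
  refine ⟨0, ?_⟩
  rintro x ⟨π, -, rfl⟩
  exact cost_nonneg π

lemma EMD_nonneg (Ω : Set E) (f g : E → ℝ) : 0 ≤ EMD Ω f g := by
  apply Real.sInf_nonneg
  rintro x ⟨π, -, rfl⟩
  exact cost_nonneg π

lemma EMD_le_cost (Ω : Set E) (f g : E → ℝ) (π : Measure (E × E))
    (h1 : π.fst = densityMeasure Ω f) (h2 : π.snd = densityMeasure Ω g) :
    EMD Ω f g ≤ ∫ p, dist p.1 p.2 ∂π :=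
  csInf_le (bddBelow_EMDset Ω f g) ⟨π, ⟨h1, h2⟩, rfl⟩

lemma exists_coupling_lt (Ω : Set E) (f g : E → ℝ)
    (hne : ∃ π : Measure (E × E), π.fst = densityMeasure Ω f ∧ π.snd = densityMeasure Ω g)
    {ε : ℝ} (hε : 0 < ε) :
    ∃ π : Measure (E × E), π.fst = densityMeasure Ω f ∧ π.snd = densityMeasure Ω g ∧
      ∫ p, dist p.1 p.2 ∂π < EMD Ω f g + ε := by
  obtain ⟨π₀, h₀⟩ := hne
  have hne' : ((fun π : Measure (E × E) => ∫ p, dist p.1 p.2 ∂π) ''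
      {π | π.fst = densityMeasure Ω f ∧ π.snd = densityMeasure Ω g}).Nonempty :=
    ⟨_, ⟨π₀, h₀, rfl⟩⟩
  have hlt : EMD Ω f g < EMD Ω f g + ε := lt_add_of_pos_right _ hε
  obtain ⟨x, ⟨π, hπ, rfl⟩, hx⟩ := exists_lt_of_csInf_lt hne' hlt
  exact ⟨π, hπ.1, hπ.2, hx⟩

lemma densityMeasure_congr (Ω : Set E) {f g : E → ℝ}
    (h : f =ᵐ[volume.restrict Ω] g) : densityMeasure Ω f = densityMeasure Ω g := by
  unfold densityMeasure
  exact withDensity_congr_ae (h.mono fun x hx => by simp only [hx])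

lemma EMD_congr_meas (Ω : Set E) {f g f' g' : E → ℝ}
    (h1 : densityMeasure Ω f = densityMeasure Ω f')
    (h2 : densityMeasure Ω g = densityMeasure Ω g') :
    EMD Ω f g = EMD Ω f' g' := by
  unfold EMD
  rw [h1, h2]

lemma densityMeasure_univ (Ω : Set E) (f : E → ℝ) :
    densityMeasure Ω f Set.univ = ∫⁻ x, ENNReal.ofReal (f x) ∂(volume.restrict Ω) := by
  unfold densityMeasure
  rw [withDensity_apply _ MeasurableSet.univ, Measure.restrict_univ]

lemma densityMeasure_univ_ne_top (Ω : Set E) {f : E → ℝ} (hf : IntegrableOn f Ω) :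
    densityMeasure Ω f Set.univ ≠ ⊤ := by
  rw [densityMeasure_univ]
  exact hf.lintegral_lt_top.ne

lemma densityMeasure_finite (Ω : Set E) {f : E → ℝ} (hf : IntegrableOn f Ω) :
    IsFiniteMeasure (densityMeasure Ω f) :=
  ⟨lt_top_iff_ne_top.mpr (densityMeasure_univ_ne_top Ω hf)⟩

lemma densityMeasure_compl (Ω : Set E) (hΩ : MeasurableSet Ω) (f : E → ℝ) :
    densityMeasure Ω f Ωᶜ = 0 := by
  unfold densityMeasure
  rw [withDensity_apply _ hΩ.compl, Measure.restrict_restrict hΩ.compl,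
    Set.compl_inter_self, Measure.restrict_empty, lintegral_zero_measure]

lemma densityMeasure_mono_null (Ω : Set E) (hΩ : MeasurableSet Ω) (f : E → ℝ)
    {s : Set E} (hs : s ⊆ Ωᶜ) : densityMeasure Ω f s = 0 :=
  measure_mono_null hs (densityMeasure_compl Ω hΩ f)

/-- mass of density measure via a real integral, for nonnegative integrable density -/
lemma densityMeasure_univ_eq (Ω : Set E) {f : E → ℝ} (hf : IntegrableOn f Ω)
    (hf0 : ∀ x, 0 ≤ f x) :
    densityMeasure Ω f Set.univ = ENNReal.ofReal (∫ x in Ω, f x) := by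
  rw [densityMeasure_univ,
    ← ofReal_integral_eq_lintegral_ofReal hf (Filter.Eventually.of_forall hf0)]

lemma coupling_univ (Ω : Set E) (f : E → ℝ) (π : Measure (E × E))
    (h1 : π.fst = densityMeasure Ω f) :
    π Set.univ = densityMeasure Ω f Set.univ := by
  rw [← h1, Measure.fst_apply MeasurableSet.univ, Set.preimage_univ]

lemma coupling_ae_mem (Ω : Set E) (hΩ : MeasurableSet Ω) (f g : E → ℝ)
    (π : Measure (E × E))
    (h1 : π.fst = densityMeasure Ω f) (h2 : π.snd = densityMeasure Ω g) :
    ∀ᵐ p : E × E ∂π, p.1 ∈ Ω ∧ p.2 ∈ Ω := by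
  have hfst : π (Prod.fst ⁻¹' Ωᶜ) = 0 := by
    rw [← Measure.fst_apply hΩ.compl, h1]
    exact densityMeasure_compl Ω hΩ f
  have hsnd : π (Prod.snd ⁻¹' Ωᶜ) = 0 := by
    rw [← Measure.snd_apply hΩ.compl, h2]
    exact densityMeasure_compl Ω hΩ g
  have : π {p : E × E | ¬(p.1 ∈ Ω ∧ p.2 ∈ Ω)} = 0 := by
    refine measure_mono_null ?_ (measure_union_null hfst hsnd)
    intro p hp
    simp only [Set.mem_setOf_eq, not_and_or] at hp
    rcases hp with hp | hp
    · exact Or.inl hp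
    · exact Or.inr hp
  exact (ae_iff).mpr this

lemma integrable_dist_coupling (Ω : Set E) (hΩ : MeasurableSet Ω)
    {C : ℝ} (hC : ∀ x ∈ Ω, ‖x‖ ≤ C) (f g : E → ℝ) (hf : IntegrableOn f Ω)
    (π : Measure (E × E))
    (h1 : π.fst = densityMeasure Ω f) (h2 : π.snd = densityMeasure Ω g) :
    Integrable (fun p : E × E => dist p.1 p.2) π := by
  have : IsFiniteMeasure π := by
    constructor
    rw [coupling_univ Ω f π h1]
    exact lt_top_iff_ne_top.mpr (densityMeasure_univ_ne_top Ω hf)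
  apply Integrable.mono' (integrable_const (C + C))
  · exact (continuous_fst.dist continuous_snd).aestronglyMeasurable
  · filter_upwards [coupling_ae_mem Ω hΩ f g π h1 h2] with p hp
    rw [Real.norm_eq_abs, abs_of_nonneg dist_nonneg, dist_eq_norm]
    calc ‖p.1 - p.2‖ ≤ ‖p.1‖ + ‖p.2‖ := norm_sub_le _ _
    _ ≤ C + C := add_le_add (hC _ hp.1) (hC _ hp.2)

lemma measure_eq_zero_of_univ_eq_zero {α : Type*} [MeasurableSpace α]
    {μ : Measure α} (h : μ Set.univ = 0) : μ = 0 :=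
  Measure.measure_univ_eq_zero.mp h

lemma EMD_zero_of_zero (Ω : Set E) (f g : E → ℝ)
    (h1 : densityMeasure Ω f = 0) (h2 : densityMeasure Ω g = 0) :
    EMD Ω f g = 0 := by
  unfold EMD
  have : {π : Measure (E × E) | π.fst = densityMeasure Ω f ∧ π.snd = densityMeasure Ω g}
      = {0} := by
    ext π
    simp only [Set.mem_setOf_eq, Set.mem_singleton_iff, h1, h2]
    constructor
    · rintro ⟨ha, -⟩
      apply measure_eq_zero_of_univ_eq_zero
      have : π.fst Set.univ = 0 := by rw [ha]; simp
      rwa [Measure.fst_apply MeasurableSet.univ, Set.preimage_univ] at this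
    · rintro rfl
      constructor <;> simp [Measure.fst, Measure.snd]
  rw [this]
  simp

/-- existence of a coupling between two finite measures of equal mass -/
lemma coupling_exists {α : Type*} [MeasurableSpace α] (A B : Measure α)
    (hA : A Set.univ ≠ ⊤) (hmass : A Set.univ = B Set.univ) :
    ∃ π : Measure (α × α), π.fst = A ∧ π.snd = B := by
  by_cases h0 : A Set.univ = 0
  · have hA0 : A = 0 := measure_eq_zero_of_univ_eq_zero h0
    have hB0 : B = 0 := measure_eq_zero_of_univ_eq_zero (hmass ▸ h0)
    exact ⟨0, by simp [hA0, Measure.fst], by simp [hB0, Measure.snd]⟩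
  · have hBtop : B Set.univ ≠ ⊤ := hmass ▸ hA
    have hB0 : B Set.univ ≠ 0 := fun h => h0 (hmass.trans h)
    have hAfin : IsFiniteMeasure A := ⟨lt_top_iff_ne_top.mpr hA⟩
    have hBfin : IsFiniteMeasure B := ⟨lt_top_iff_ne_top.mpr hBtop⟩
    refine ⟨(A Set.univ)⁻¹ • A.prod B, ?_, ?_⟩
    · ext s hs
      rw [Measure.fst_apply hs, Measure.smul_apply, smul_eq_mul]
      have hpre : Prod.fst ⁻¹' s = s ×ˢ (Set.univ : Set α) := by
        ext p; simp
      rw [hpre, Measure.prod_prod, hmass, mul_comm (A s), ← mul_assoc,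
        ENNReal.inv_mul_cancel (hmass ▸ h0) (hmass ▸ hA), one_mul]
    · ext s hs
      rw [Measure.snd_apply hs, Measure.smul_apply, smul_eq_mul]
      have hpre : Prod.snd ⁻¹' s = (Set.univ : Set α) ×ˢ s := by
        ext p; simp
      rw [hpre, Measure.prod_prod]
      rw [← mul_assoc, ENNReal.inv_mul_cancel h0 hA, one_mul]

end Helpers

section Helpers2

open Pointwise

variable {d : ℕ}

local notation "E" => EuclideanSpace ℝ (Fin d)

lemma cost_map_swap (π : Measure (E × E)) :
    ∫ p, dist p.1 p.2 ∂(π.map Prod.swap) = ∫ p, dist p.1 p.2 ∂π := by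
  rw [integral_map measurable_swap.aemeasurable
    (continuous_fst.dist continuous_snd).aestronglyMeasurable]
  simp [dist_comm]

lemma EMD_comm (Ω : Set E) (f g : E → ℝ) : EMD Ω f g = EMD Ω g f := by
  unfold EMD
  congr 1
  ext x
  constructor
  · rintro ⟨π, ⟨h1, h2⟩, rfl⟩
    exact ⟨π.map Prod.swap, ⟨by rw [Measure.fst_map_swap, h2], by rw [Measure.snd_map_swap, h1]⟩,
      cost_map_swap π⟩
  · rintro ⟨π, ⟨h1, h2⟩, rfl⟩
    exact ⟨π.map Prod.swap, ⟨by rw [Measure.fst_map_swap, h2], by rw [Measure.snd_map_swap, h1]⟩,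
      cost_map_swap π⟩

lemma densityMeasure_const_smul (Ω : Set E) {u : E → ℝ} (hu : Measurable u)
    {c : ℝ} (hc : 0 ≤ c) :
    densityMeasure Ω (fun x => c * u x) = ENNReal.ofReal c • densityMeasure Ω u := by
  unfold densityMeasure
  have hfun : (fun x => ENNReal.ofReal ((fun x => c * u x) x))
      = (ENNReal.ofReal c • fun x => ENNReal.ofReal (u x)) := by
    funext x
    simp only [Pi.smul_apply, smul_eq_mul]
    exact ENNReal.ofReal_mul hc
  rw [hfun, withDensity_smul _ hu.ennreal_ofReal]

lemma EMD_smul (Ω : Set E) {u v : E → ℝ} (hu : Measurable u) (hv : Measurable v)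
    {c : ℝ} (hc : 0 < c) :
    EMD Ω (fun x => c * u x) (fun x => c * v x) = c * EMD Ω u v := by
  set k : ENNReal := ENNReal.ofReal c with hk
  have hk0 : k ≠ 0 := by
    simp [hk, ENNReal.ofReal_eq_zero, not_le, hc]
  have hktop : k ≠ ⊤ := ENNReal.ofReal_ne_top
  have hDu := densityMeasure_const_smul Ω hu hc.le
  have hDv := densityMeasure_const_smul Ω hv hc.le
  have hsets : {π : Measure (E × E) | π.fst = densityMeasure Ω (fun x => c * u x)
        ∧ π.snd = densityMeasure Ω (fun x => c * v x)}
      = (fun π : Measure (E × E) => k • π) ''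
        {π | π.fst = densityMeasure Ω u ∧ π.snd = densityMeasure Ω v} := by
    ext π
    simp only [Set.mem_setOf_eq, Set.mem_image, hDu, hDv]
    constructor
    · rintro ⟨h1, h2⟩
      refine ⟨k⁻¹ • π, ⟨?_, ?_⟩, ?_⟩
      · rw [Measure.fst, Measure.map_smul, ← Measure.fst, h1, smul_smul,
          ENNReal.inv_mul_cancel hk0 hktop, one_smul]
      · rw [Measure.snd, Measure.map_smul, ← Measure.snd, h2, smul_smul,
          ENNReal.inv_mul_cancel hk0 hktop, one_smul]
      · rw [smul_smul, ENNReal.mul_inv_cancel hk0 hktop, one_smul]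
    · rintro ⟨π', ⟨h1, h2⟩, rfl⟩
      constructor
      · rw [Measure.fst, Measure.map_smul, ← Measure.fst, h1]
      · rw [Measure.snd, Measure.map_smul, ← Measure.snd, h2]
  unfold EMD
  rw [hsets, Set.image_image]
  have hcost : ∀ π : Measure (E × E), ∫ p, dist p.1 p.2 ∂(k • π) = c * ∫ p, dist p.1 p.2 ∂π := by
    intro π
    rw [integral_smul_measure, hk, ENNReal.toReal_ofReal hc.le, smul_eq_mul]
  simp only [hcost]
  have himg : ((fun π : Measure (E × E) => c * ∫ p, dist p.1 p.2 ∂π) ''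
        {π | π.fst = densityMeasure Ω u ∧ π.snd = densityMeasure Ω v})
      = (fun y => c * y) '' ((fun π : Measure (E × E) => ∫ p, dist p.1 p.2 ∂π) ''
        {π | π.fst = densityMeasure Ω u ∧ π.snd = densityMeasure Ω v}) := by
    rw [Set.image_image]
  rw [himg]
  have : (fun y : ℝ => c * y) '' _ = c • ((fun π : Measure (E × E) => ∫ p, dist p.1 p.2 ∂π) ''
      {π | π.fst = densityMeasure Ω u ∧ π.snd = densityMeasure Ω v}) := rfl
  rw [this, Real.sInf_smul_of_nonneg hc.le, smul_eq_mul]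

lemma meanOn_smul (Ω : Set E) (f : E → ℝ) (l : ℝ) :
    meanOn Ω (fun x => l * f x) = l * meanOn Ω f := by
  unfold meanOn
  rw [average_eq, average_eq]
  have : ∫ x in Ω, l * f x = l * ∫ x in Ω, f x := by
    simpa [smul_eq_mul] using integral_smul l f (μ := volume.restrict Ω)
  rw [this, smul_eq_mul, smul_eq_mul]
  ring

lemma meanOn_add (Ω : Set E) {f g : E → ℝ} (hf : IntegrableOn f Ω) (hg : IntegrableOn g Ω) :
    meanOn Ω (fun x => f x + g x) = meanOn Ω f + meanOn Ω g := by
  unfold meanOn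
  rw [average_eq, average_eq, average_eq, integral_add hf hg, smul_eq_mul, smul_eq_mul,
    smul_eq_mul]
  ring

lemma meanOn_congr (Ω : Set E) {f g : E → ℝ} (h : f =ᵐ[volume.restrict Ω] g) :
    meanOn Ω f = meanOn Ω g :=
  average_congr h

lemma struc_congr (Ω : Set E) {f f' : E → ℝ} (h : f =ᵐ[volume.restrict Ω] f') :
    struc Ω f = struc Ω f' := by
  unfold struc
  rw [meanOn_congr Ω h]
  apply EMD_congr_meas <;> apply densityMeasure_congr <;>
    exact h.mono fun x hx => by dsimp only; rw [hx]

lemma integral_sub_mean (Ω : Set E) (hvol0 : volume Ω ≠ 0) (hvolfin : volume Ω ≠ ⊤)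
    {f : E → ℝ} (hf : IntegrableOn f Ω) :
    ∫ x in Ω, (f x - meanOn Ω f) = 0 := by
  have hfin : IsFiniteMeasure (volume.restrict Ω) := by
    constructor
    rw [Measure.restrict_apply_univ]
    exact lt_top_iff_ne_top.mpr hvolfin
  have hmean : meanOn Ω f = ((volume Ω).toReal)⁻¹ * ∫ x in Ω, f x := by
    unfold meanOn
    rw [average_eq, measureReal_restrict_apply_univ, measureReal_def, smul_eq_mul]
  rw [integral_sub hf (integrable_const _), integral_const, measureReal_restrict_apply_univ, measureReal_def,
    hmean, smul_eq_mul]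
  have htr : (volume Ω).toReal ≠ 0 := ENNReal.toReal_ne_zero.mpr ⟨hvol0, hvolfin⟩
  field_simp
  ring

end Helpers2

section Helpers3

variable {d : ℕ}

local notation "E" => EuclideanSpace ℝ (Fin d)

lemma max_sub_max_neg (x : ℝ) : max x 0 - max (-x) 0 = x := by
  rcases le_total x 0 with h | h
  · rw [max_eq_right h, max_eq_left (neg_nonneg.mpr h)]; ring
  · rw [max_eq_left h, max_eq_right (neg_nonpos.mpr h)]; ring

lemma max_add_le_max_add_max (a b : ℝ) : max (a + b) 0 ≤ max a 0 + max b 0 := by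
  apply max_le
  · exact add_le_add (le_max_left _ _) (le_max_left _ _)
  · exact add_nonneg (le_max_right _ _) (le_max_right _ _)

lemma mul_max_zero {l : ℝ} (hl : 0 ≤ l) (a : ℝ) : max (l * a) 0 = l * max a 0 := by
  rcases le_total a 0 with h | h
  · rw [max_eq_right h, max_eq_right (mul_nonpos_of_nonneg_of_nonpos hl h), mul_zero]
  · rw [max_eq_left h, max_eq_left (mul_nonneg hl h)]

lemma integrableOn_max_zero {Ω : Set E} {u : E → ℝ} (hu : IntegrableOn u Ω) :
    IntegrableOn (fun x => max (u x) 0) Ω := by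
  apply Integrable.mono' hu.abs
  · exact (hu.aestronglyMeasurable.aemeasurable.max aemeasurable_const).aestronglyMeasurable
  · filter_upwards with x
    rw [Real.norm_eq_abs, abs_of_nonneg (le_max_right _ _)]
    rcases le_total (u x) 0 with h | h
    · rw [max_eq_right h]; exact abs_nonneg _
    · rw [max_eq_left h]; exact le_abs_self _

lemma struc_nonneg (Ω : Set E) (f : E → ℝ) : 0 ≤ struc Ω f :=
  EMD_nonneg Ω _ _

lemma struc_smul (Ω : Set E) (f : E → ℝ) (hf : IntegrableOn f Ω) (l : ℝ) :
    struc Ω (fun x => l * f x) = |l| * struc Ω f := by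
  -- pass to a measurable representative
  obtain ⟨f', hf'meas, hae⟩ :
      ∃ f' : E → ℝ, Measurable f' ∧ f =ᵐ[volume.restrict Ω] f' := by
    have h := hf.aestronglyMeasurable.aemeasurable
    exact ⟨h.mk f, h.measurable_mk, h.ae_eq_mk⟩
  have h1 : struc Ω (fun x => l * f x) = struc Ω (fun x => l * f' x) :=
    struc_congr Ω (hae.mono fun x hx => by dsimp only; rw [hx])
  have h2 : struc Ω f = struc Ω f' := struc_congr Ω hae
  rw [h1, h2]
  set c := meanOn Ω f' with hc
  rcases lt_trichotomy l 0 with hl | hl | hl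
  · -- negative case
    have hm : 0 < -l := by linarith
    have e1 : (fun x => max (l * f' x - meanOn Ω (fun x => l * f' x)) 0)
        = fun x => (-l) * max (c - f' x) 0 := by
      funext x
      rw [meanOn_smul, ← hc, ← mul_max_zero hm.le]
      congr 1
      ring
    have e2 : (fun x => max (meanOn Ω (fun x => l * f' x) - l * f' x) 0)
        = fun x => (-l) * max (f' x - c) 0 := by
      funext x
      rw [meanOn_smul, ← hc, ← mul_max_zero hm.le]
      congr 1
      ring
    unfold struc
    rw [e1, e2, ← hc]
    rw [EMD_smul Ω (u := fun x => max (c - f' x) 0) (v := fun x => max (f' x - c) 0)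
      ((measurable_const.sub hf'meas).max measurable_const)
      ((hf'meas.sub measurable_const).max measurable_const) hm,
      EMD_comm, abs_of_neg hl]
  · -- zero case
    have e1 : (fun x => max (l * f' x - meanOn Ω (fun x => l * f' x)) 0)
        = fun _ => (0:ℝ) := by
      funext x
      rw [meanOn_smul, hl]
      simp
    have e2 : (fun x => max (meanOn Ω (fun x => l * f' x) - l * f' x) 0)
        = fun _ => (0:ℝ) := by
      funext x
      rw [meanOn_smul, hl]
      simp
    unfold struc
    rw [e1, e2, hl]
    have hz : densityMeasure Ω (fun _ : E => (0:ℝ)) = 0 := by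
      unfold densityMeasure
      simp
    rw [EMD_zero_of_zero Ω _ _ hz hz]
    simp
  · -- positive case
    have e1 : (fun x => max (l * f' x - meanOn Ω (fun x => l * f' x)) 0)
        = fun x => l * max (f' x - c) 0 := by
      funext x
      rw [meanOn_smul, ← hc, ← mul_max_zero hl.le]
      congr 1
      ring
    have e2 : (fun x => max (meanOn Ω (fun x => l * f' x) - l * f' x) 0)
        = fun x => l * max (c - f' x) 0 := by
      funext x
      rw [meanOn_smul, ← hc, ← mul_max_zero hl.le]
      congr 1
      ring
    unfold struc
    rw [e1, e2, ← hc]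
    rw [EMD_smul Ω (u := fun x => max (f' x - c) 0) (v := fun x => max (c - f' x) 0)
      ((hf'meas.sub measurable_const).max measurable_const)
      ((measurable_const.sub hf'meas).max measurable_const) hl,
      abs_of_pos hl]

end Helpers3

section Helpers4

variable {d : ℕ}

local notation "E" => EuclideanSpace ℝ (Fin d)

lemma exists_partition (Ω : Set E) (hΩc : IsCompact Ω) {δ : ℝ} (hδ : 0 < δ) :
    ∃ (n : ℕ) (pt : Fin n → E) (C : Fin n → Set E),
      (∀ i, MeasurableSet (C i)) ∧ (Pairwise (Function.onFun Disjoint C)) ∧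
      (∀ i, C i ⊆ Metric.ball (pt i) δ) ∧ (Ω ⊆ ⋃ i, C i) := by
  have hcover : Ω ⊆ ⋃ x ∈ Ω, Metric.ball x δ := by
    intro x hx
    exact Set.mem_biUnion hx (Metric.mem_ball_self hδ)
  obtain ⟨b', hb'sub, hb'fin, hb'cover⟩ :=
    hΩc.elim_finite_subcover_image (fun x _ => Metric.isOpen_ball) hcover
  classical
  set F := hb'fin.toFinset with hF
  set n := F.card with hn
  set pt : Fin n → E := fun i => (F.equivFin.symm i : E) with hpt
  set C : Fin n → Set E :=
    fun i => Metric.ball (pt i) δ \ ⋃ j : Fin n, ⋃ (_ : j < i), Metric.ball (pt j) δ with hC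
  have hCmeas : ∀ i, MeasurableSet (C i) := fun i =>
    measurableSet_ball.diff (MeasurableSet.iUnion fun j =>
      MeasurableSet.iUnion fun _ => measurableSet_ball)
  have hCball : ∀ i, C i ⊆ Metric.ball (pt i) δ := fun i => Set.diff_subset
  have hdisj : ∀ i j : Fin n, i < j → Disjoint (C i) (C j) := by
    intro i j hij
    rw [Set.disjoint_left]
    intro x hxi hxj
    exact hxj.2 (Set.mem_iUnion.mpr ⟨i, Set.mem_iUnion.mpr ⟨hij, hxi.1⟩⟩)
  refine ⟨n, pt, C, hCmeas, ?_, hCball, ?_⟩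
  · intro i j hij
    rcases lt_or_gt_of_ne hij with h | h
    · exact hdisj i j h
    · exact (hdisj j i h).symm
  · intro x hx
    have hx' := hb'cover hx
    rw [Set.mem_iUnion₂] at hx'
    obtain ⟨y, hy, hxy⟩ := hx'
    have hyF : y ∈ F := hb'fin.mem_toFinset.mpr hy
    set i1 : Fin n := F.equivFin ⟨y, hyF⟩ with hi1
    have hpti1 : pt i1 = y := by
      simp only [hpt, hi1, Equiv.symm_apply_apply]
    have hmem : x ∈ Metric.ball (pt i1) δ := by rwa [hpti1]
    set S : Finset (Fin n) := Finset.univ.filter (fun i => x ∈ Metric.ball (pt i) δ) with hS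
    have hSne : S.Nonempty :=
      ⟨i1, by simp only [hS, Finset.mem_filter, Finset.mem_univ, true_and]; exact hmem⟩
    set i0 := S.min' hSne with hi0
    have hi0S : i0 ∈ S := S.min'_mem hSne
    have hxball : x ∈ Metric.ball (pt i0) δ := by
      have := hi0S
      simp only [hS, Finset.mem_filter] at this
      exact this.2
    refine Set.mem_iUnion.mpr ⟨i0, hxball, ?_⟩
    intro hmem'
    rw [Set.mem_iUnion] at hmem'
    obtain ⟨j, hj⟩ := hmem'
    rw [Set.mem_iUnion] at hj
    obtain ⟨hji, hjball⟩ := hj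
    have hjS : j ∈ S := by
      simp only [hS, Finset.mem_filter, Finset.mem_univ, true_and]; exact hjball
    exact absurd (S.min'_le j hjS) (not_le.mpr hji)

end Helpers4

section Helpers5

lemma measure_partition_sum {α : Type*} [MeasurableSpace α] {ι : Type*} [Fintype ι]
    (μ : Measure α) (C : ι → Set α) (hme : ∀ i, MeasurableSet (C i))
    (hdisj : Pairwise (Function.onFun Disjoint C))
    (hnull : μ (⋃ i, C i)ᶜ = 0) {s : Set α} (hsm : MeasurableSet s) :
    μ s = ∑ i, μ (s ∩ C i) := by
  have h1 : μ (s ∩ ⋃ i, C i) + μ (s \ ⋃ i, C i) = μ s :=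
    measure_inter_add_diff s (MeasurableSet.iUnion hme)
  have h2 : μ (s \ ⋃ i, C i) = 0 :=
    measure_mono_null (fun x hx => hx.2) hnull
  have h3 : μ s = μ (s ∩ ⋃ i, C i) := by rw [← h1, h2, add_zero]
  rw [h3, Set.inter_iUnion, measure_iUnion
    (fun i j hij => ((hdisj hij).mono Set.inter_subset_right Set.inter_subset_right))
    (fun i => hsm.inter (hme i)), tsum_fintype]

end Helpers5

section Core

variable {d : ℕ}

local notation "E" => EuclideanSpace ℝ (Fin d)

set_option maxHeartbeats 2000000 in
lemma EMD_triangle_core (Ω : Set E) (hΩc : IsCompact Ω)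
    (s t : E → ℝ) (hs : Measurable s) (ht : Measurable t)
    (hsi : IntegrableOn s Ω) (hti : IntegrableOn t Ω)
    (hs0 : ∫ x in Ω, s x = 0) (ht0 : ∫ x in Ω, t x = 0) :
    EMD Ω (fun x => max (s x + t x) 0) (fun x => max (-(s x + t x)) 0)
      ≤ EMD Ω (fun x => max (s x) 0) (fun x => max (-s x) 0)
        + EMD Ω (fun x => max (t x) 0) (fun x => max (-t x) 0) := by
  classical
  have hΩm : MeasurableSet Ω := hΩc.isClosed.measurableSet
  set ps : E → ℝ := fun x => max (s x) 0 with hps_def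
  set ns : E → ℝ := fun x => max (-s x) 0 with hns_def
  set pt2 : E → ℝ := fun x => max (t x) 0 with hpt2_def
  set nt2 : E → ℝ := fun x => max (-t x) 0 with hnt2_def
  set pu : E → ℝ := fun x => max (s x + t x) 0 with hpu_def
  set nu : E → ℝ := fun x => max (-(s x + t x)) 0 with hnu_def
  set rf : E → ℝ := fun x => ps x + pt2 x - pu x with hrf_def
  -- pointwise facts
  have hps0 : ∀ x, 0 ≤ ps x := fun x => le_max_right _ _
  have hns0 : ∀ x, 0 ≤ ns x := fun x => le_max_right _ _
  have hpt20 : ∀ x, 0 ≤ pt2 x := fun x => le_max_right _ _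
  have hnt20 : ∀ x, 0 ≤ nt2 x := fun x => le_max_right _ _
  have hpu0 : ∀ x, 0 ≤ pu x := fun x => le_max_right _ _
  have hnu0 : ∀ x, 0 ≤ nu x := fun x => le_max_right _ _
  have hrf0 : ∀ x, 0 ≤ rf x := by
    intro x
    have := max_add_le_max_add_max (s x) (t x)
    simp only [hrf_def, hps_def, hpt2_def, hpu_def]
    linarith
  have hid1 : ∀ x, pu x + rf x = ps x + pt2 x := by
    intro x; simp only [hrf_def]; ring
  have hid2 : ∀ x, nu x + rf x = ns x + nt2 x := by
    intro x
    have e1 := max_sub_max_neg (s x)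
    have e2 := max_sub_max_neg (t x)
    have e3 := max_sub_max_neg (s x + t x)
    simp only [hrf_def, hps_def, hns_def, hpt2_def, hnt2_def, hpu_def, hnu_def] at *
    linarith
  -- measurability and integrability
  have hpsm : Measurable ps := hs.max measurable_const
  have hnsm : Measurable ns := hs.neg.max measurable_const
  have hpt2m : Measurable pt2 := ht.max measurable_const
  have hnt2m : Measurable nt2 := ht.neg.max measurable_const
  have hpum : Measurable pu := (hs.add ht).max measurable_const
  have hnum : Measurable nu := (hs.add ht).neg.max measurable_const
  have hrfm : Measurable rf := (hpsm.add hpt2m).sub hpum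
  have hpsi : IntegrableOn ps Ω := integrableOn_max_zero hsi
  have hnsi : IntegrableOn ns Ω := integrableOn_max_zero hsi.neg
  have hpt2i : IntegrableOn pt2 Ω := integrableOn_max_zero hti
  have hnt2i : IntegrableOn nt2 Ω := integrableOn_max_zero hti.neg
  have hpui : IntegrableOn pu Ω := integrableOn_max_zero (hsi.add hti)
  have hnui : IntegrableOn nu Ω := integrableOn_max_zero (hsi.add hti).neg
  have hrfi : IntegrableOn rf Ω := (hpsi.add hpt2i).sub hpui
  -- the measures
  set A : Measure E := densityMeasure Ω pu with hA_def
  set B : Measure E := densityMeasure Ω nu with hB_def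
  set A1 : Measure E := densityMeasure Ω ps with hA1_def
  set B1 : Measure E := densityMeasure Ω ns with hB1_def
  set A2 : Measure E := densityMeasure Ω pt2 with hA2_def
  set B2 : Measure E := densityMeasure Ω nt2 with hB2_def
  set R : Measure E := densityMeasure Ω rf with hR_def
  haveI : IsFiniteMeasure A := densityMeasure_finite Ω hpui
  haveI : IsFiniteMeasure B := densityMeasure_finite Ω hnui
  haveI : IsFiniteMeasure A1 := densityMeasure_finite Ω hpsi
  haveI : IsFiniteMeasure B1 := densityMeasure_finite Ω hnsi
  haveI : IsFiniteMeasure A2 := densityMeasure_finite Ω hpt2i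
  haveI : IsFiniteMeasure B2 := densityMeasure_finite Ω hnt2i
  haveI : IsFiniteMeasure R := densityMeasure_finite Ω hrfi
  -- measure identities
  have hsum_meas : ∀ (u v : E → ℝ), Measurable u → (∀ x, 0 ≤ u x) → (∀ x, 0 ≤ v x) →
      densityMeasure Ω u + densityMeasure Ω v
        = densityMeasure Ω (fun x => u x + v x) := by
    intro u v hum hu0 hv0
    unfold densityMeasure
    rw [← withDensity_add_left hum.ennreal_ofReal]
    congr 1
    funext x
    simp only [Pi.add_apply]
    rw [← ENNReal.ofReal_add (hu0 x) (hv0 x)]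
  have hAR : A + R = A1 + A2 := by
    rw [hA_def, hR_def, hA1_def, hA2_def, hsum_meas pu rf hpum hpu0 hrf0,
      hsum_meas ps pt2 hpsm hps0 hpt20]
    congr 1
    funext x
    exact hid1 x
  have hBR : B + R = B1 + B2 := by
    rw [hB_def, hR_def, hB1_def, hB2_def, hsum_meas nu rf hnum hnu0 hrf0,
      hsum_meas ns nt2 hnsm hns0 hnt20]
    congr 1
    funext x
    exact hid2 x
  -- mass identities
  have hmass : ∀ (u v : E → ℝ), IntegrableOn u Ω → IntegrableOn v Ω →
      (∀ x, 0 ≤ u x) → (∀ x, 0 ≤ v x) → (∫ x in Ω, u x) = (∫ x in Ω, v x) →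
      densityMeasure Ω u Set.univ = densityMeasure Ω v Set.univ := by
    intro u v hu hv hu0 hv0 hint
    rw [densityMeasure_univ_eq Ω hu hu0, densityMeasure_univ_eq Ω hv hv0, hint]
  have hintS : (∫ x in Ω, ps x) = ∫ x in Ω, ns x := by
    have : (∫ x in Ω, (ps x - ns x)) = ∫ x in Ω, s x := by
      congr 1
      funext x
      exact max_sub_max_neg (s x)
    rw [integral_sub hpsi hnsi] at this
    rw [hs0] at this
    linarith
  have hintT : (∫ x in Ω, pt2 x) = ∫ x in Ω, nt2 x := by
    have : (∫ x in Ω, (pt2 x - nt2 x)) = ∫ x in Ω, t x := by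
      congr 1
      funext x
      exact max_sub_max_neg (t x)
    rw [integral_sub hpt2i hnt2i] at this
    rw [ht0] at this
    linarith
  have hintU : (∫ x in Ω, pu x) = ∫ x in Ω, nu x := by
    have h1 : (∫ x in Ω, (pu x - nu x)) = ∫ x in Ω, (s x + t x) := by
      congr 1
      funext x
      exact max_sub_max_neg (s x + t x)
    rw [integral_sub hpui hnui, integral_add hsi hti, hs0, ht0] at h1
    linarith
  have hmassS : A1 Set.univ = B1 Set.univ := hmass ps ns hpsi hnsi hps0 hns0 hintS
  have hmassT : A2 Set.univ = B2 Set.univ := hmass pt2 nt2 hpt2i hnt2i hpt20 hnt20 hintT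
  have hmassU : A Set.univ = B Set.univ := hmass pu nu hpui hnui hpu0 hnu0 hintU
  -- trivial case
  by_cases hA0 : A = 0
  · have hB0 : B = 0 := by
      apply measure_eq_zero_of_univ_eq_zero
      rw [← hmassU, hA0]
      simp
    rw [EMD_zero_of_zero Ω _ _ hA0 hB0]
    exact add_nonneg (EMD_nonneg Ω _ _) (EMD_nonneg Ω _ _)
  -- main case
  obtain ⟨Cb, hCb⟩ := isBounded_iff_forall_norm_le.mp hΩc.isBounded
  apply le_of_forall_pos_le_add
  intro ε hε
  -- near-optimal couplings
  obtain ⟨π₁, hπ₁f, hπ₁s, hπ₁c⟩ := exists_coupling_lt Ω ps ns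
    (coupling_exists A1 B1 (densityMeasure_univ_ne_top Ω hpsi) hmassS) (by positivity : (0:ℝ) < ε/4)
  obtain ⟨π₂, hπ₂f, hπ₂s, hπ₂c⟩ := exists_coupling_lt Ω pt2 nt2
    (coupling_exists A2 B2 (densityMeasure_univ_ne_top Ω hpt2i) hmassT) (by positivity : (0:ℝ) < ε/4)
  set π : Measure (E × E) := π₁ + π₂ with hπ_def
  have hπfst : π.fst = A + R := by
    rw [hπ_def, Measure.fst_add, hπ₁f, hπ₂f, ← hA1_def, ← hA2_def, hAR]
  have hπsnd : π.snd = B + R := by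
    rw [hπ_def, Measure.snd_add, hπ₁s, hπ₂s, ← hB1_def, ← hB2_def, hBR]
  haveI hARfin : IsFiniteMeasure (A + R) := by infer_instance
  haveI hπfin : IsFiniteMeasure π := by
    constructor
    have : π Set.univ = (A + R) Set.univ := by
      rw [← hπfst, Measure.fst_apply MeasurableSet.univ, Set.preimage_univ]
    rw [this]
    exact measure_lt_top _ _
  -- integrability of dist against the couplings
  have hd1 : Integrable (fun p : E × E => dist p.1 p.2) π₁ :=
    integrable_dist_coupling Ω hΩm hCb ps ns hpsi π₁ hπ₁f hπ₁s
  have hd2 : Integrable (fun p : E × E => dist p.1 p.2) π₂ :=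
    integrable_dist_coupling Ω hΩm hCb pt2 nt2 hpt2i π₂ hπ₂f hπ₂s
  have hdπ : Integrable (fun p : E × E => dist p.1 p.2) π := by
    rw [hπ_def]
    exact hd1.add_measure hd2
  -- constants
  set MA : ℝ := (A Set.univ).toReal with hMA_def
  set Mpi : ℝ := (π Set.univ).toReal with hMpi_def
  have hMA0 : 0 ≤ MA := ENNReal.toReal_nonneg
  have hMpi0 : 0 ≤ Mpi := ENNReal.toReal_nonneg
  set δ : ℝ := ε / (4 * (MA + Mpi) + 1) with hδ_def
  have hδpos : 0 < δ := by
    apply div_pos hε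
    nlinarith
  -- partition
  obtain ⟨n, pt, C, hCmeas, hCdisj, hCball, hΩU⟩ := exists_partition Ω hΩc hδpos
  set U : Set E := ⋃ i, C i with hU_def
  have hUm : MeasurableSet U := MeasurableSet.iUnion hCmeas
  have hUcsub : Uᶜ ⊆ Ωᶜ := fun x hx hxΩ => hx (hΩU hxΩ)
  have hACnull : A Uᶜ = 0 := densityMeasure_mono_null Ω hΩm pu hUcsub
  have hBCnull : B Uᶜ = 0 := densityMeasure_mono_null Ω hΩm nu hUcsub
  have hRCnull : R Uᶜ = 0 := densityMeasure_mono_null Ω hΩm rf hUcsub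
  -- coupling concentrated on U × U
  have hπfstU : π (Prod.fst ⁻¹' Uᶜ) = 0 := by
    rw [← Measure.fst_apply hUm.compl, hπfst, Measure.add_apply, hACnull, hRCnull]
    simp
  have hπsndU : π (Prod.snd ⁻¹' Uᶜ) = 0 := by
    rw [← Measure.snd_apply hUm.compl, hπsnd, Measure.add_apply, hBCnull, hRCnull]
    simp
  have hπU : π {p : E × E | ¬(p.1 ∈ U ∧ p.2 ∈ U)} = 0 := by
    refine measure_mono_null ?_ (measure_union_null hπfstU hπsndU)
    intro p hp
    simp only [Set.mem_setOf_eq, not_and_or] at hp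
    rcases hp with hp | hp
    · exact Or.inl hp
    · exact Or.inr hp
  -- preimage facts
  have hpre1 : ∀ sset : Set E, Prod.fst ⁻¹' sset = sset ×ˢ (Set.univ : Set E) := by
    intro sset; ext p; simp
  have hpre2 : ∀ sset : Set E, Prod.snd ⁻¹' sset = (Set.univ : Set E) ×ˢ sset := by
    intro sset; ext p; simp
  -- discrete data
  set av : Fin n → ℝ := fun i => (A (C i)).toReal with hav_def
  set bv : Fin n → ℝ := fun i => (B (C i)).toReal with hbv_def
  set rv : Fin n → ℝ := fun i => (R (C i)).toReal with hrv_def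
  set pv : Fin n → Fin n → ℝ := fun i j => (π (C i ×ˢ C j)).toReal with hpv_def
  set dd : Fin n → Fin n → ℝ := fun i j => dist (pt i) (pt j) with hdd_def
  have hdisjL : Pairwise (Function.onFun Disjoint (fun j => (Set.univ : Set E) ×ˢ C j)) := by
    intro j k hjk
    exact Set.disjoint_left.mpr fun p hp hp' =>
      (Set.disjoint_left.mp (hCdisj hjk)) hp.2 hp'.2
  have hdisjR : Pairwise (Function.onFun Disjoint (fun j => C j ×ˢ (Set.univ : Set E))) := by
    intro j k hjk
    exact Set.disjoint_left.mpr fun p hp hp' =>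
      (Set.disjoint_left.mp (hCdisj hjk)) hp.1 hp'.1
  have hnullL : π (⋃ j, (Set.univ : Set E) ×ˢ C j)ᶜ = 0 := by
    refine measure_mono_null ?_ hπU
    intro p hp
    rw [← Set.prod_iUnion] at hp
    simp only [Set.mem_compl_iff, Set.mem_prod, Set.mem_univ, true_and] at hp
    simp only [Set.mem_setOf_eq, not_and_or]
    exact Or.inr hp
  have hnullR : π (⋃ j, C j ×ˢ (Set.univ : Set E))ᶜ = 0 := by
    refine measure_mono_null ?_ hπU
    intro p hp
    rw [← Set.iUnion_prod_const] at hp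
    simp only [Set.mem_compl_iff, Set.mem_prod, Set.mem_univ, and_true] at hp
    simp only [Set.mem_setOf_eq, not_and_or]
    exact Or.inl hp
  have hrowvec : ∀ i, ∑ j, pv i j = av i + rv i := by
    intro i
    have hpart := measure_partition_sum π (fun j => (Set.univ : Set E) ×ˢ C j)
      (fun j => MeasurableSet.univ.prod (hCmeas j)) hdisjL hnullL
      ((hCmeas i).prod MeasurableSet.univ)
    have hinter : ∀ j, (C i ×ˢ (Set.univ : Set E)) ∩ ((Set.univ : Set E) ×ˢ C j)
        = C i ×ˢ C j := by
      intro j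
      rw [Set.prod_inter_prod, Set.inter_univ, Set.univ_inter]
    simp only [hinter] at hpart
    have hfstCi : π (C i ×ˢ (Set.univ : Set E)) = (A + R) (C i) := by
      rw [← hpre1, ← Measure.fst_apply (hCmeas i), hπfst]
    rw [hfstCi] at hpart
    have : ((A + R) (C i)).toReal = ∑ j, pv i j := by
      rw [hpart, ENNReal.toReal_sum (fun j _ => measure_ne_top π _)]
    rw [← this, Measure.add_apply,
      ENNReal.toReal_add (measure_ne_top A _) (measure_ne_top R _)]
  have hcolvec : ∀ j, ∑ i, pv i j = bv j + rv j := by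
    intro j
    have hpart := measure_partition_sum π (fun i => C i ×ˢ (Set.univ : Set E))
      (fun i => (hCmeas i).prod MeasurableSet.univ) hdisjR hnullR
      (MeasurableSet.univ.prod (hCmeas j))
    have hinter : ∀ i, ((Set.univ : Set E) ×ˢ C j) ∩ (C i ×ˢ (Set.univ : Set E))
        = C i ×ˢ C j := by
      intro i
      rw [Set.prod_inter_prod, Set.inter_univ, Set.univ_inter]
    simp only [hinter] at hpart
    have hsndCj : π ((Set.univ : Set E) ×ˢ C j) = (B + R) (C j) := by
      rw [← hpre2, ← Measure.snd_apply (hCmeas j), hπsnd]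
    rw [hsndCj] at hpart
    have : ((B + R) (C j)).toReal = ∑ i, pv i j := by
      rw [hpart, ENNReal.toReal_sum (fun i _ => measure_ne_top π _)]
    rw [← this, Measure.add_apply,
      ENNReal.toReal_add (measure_ne_top B _) (measure_ne_top R _)]
  -- discrete cancellation
  obtain ⟨γv, hγnn, hγrow, hγcol, hγcost⟩ :=
    discrete_cancel dd (fun i k j => dist_triangle (pt i) (pt k) (pt j)) pv av bv rv
      (fun p q => ENNReal.toReal_nonneg) (fun p => ENNReal.toReal_nonneg)
      (fun q => ENNReal.toReal_nonneg) (fun p => ENNReal.toReal_nonneg)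
      hrowvec hcolvec
  -- lifted coupling
  set w : Fin n × Fin n → ENNReal :=
    fun q => ENNReal.ofReal (γv q.1 q.2 / (av q.1 * bv q.2)) with hw_def
  set Γ : Measure (E × E) :=
    ∑ q : Fin n × Fin n, w q • ((A.restrict (C q.1)).prod (B.restrict (C q.2))) with hΓ_def
  have hγlea : ∀ i j, γv i j ≤ av i := by
    intro i j
    rw [← hγrow i]
    exact Finset.single_le_sum (fun k _ => hγnn i k) (Finset.mem_univ j)
  have hγleb : ∀ i j, γv i j ≤ bv j := by
    intro i j
    rw [← hγcol j]
    exact Finset.single_le_sum (fun k _ => hγnn k j) (Finset.mem_univ i)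
  have hACi : ∀ i, A (C i) = ENNReal.ofReal (av i) :=
    fun i => (ENNReal.ofReal_toReal (measure_ne_top A _)).symm
  have hBCj : ∀ j, B (C j) = ENNReal.ofReal (bv j) :=
    fun j => (ENNReal.ofReal_toReal (measure_ne_top B _)).symm
  have hwB : ∀ i j, w (i, j) * B (C j) = ENNReal.ofReal (γv i j / av i) := by
    intro i j
    rw [hBCj j, hw_def]
    dsimp only
    rw [← ENNReal.ofReal_mul (div_nonneg (hγnn i j)
      (mul_nonneg ENNReal.toReal_nonneg ENNReal.toReal_nonneg))]
    congr 1
    by_cases hb : bv j = 0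
    · have hγ0 : γv i j = 0 := le_antisymm (hb ▸ hγleb i j) (hγnn i j)
      rw [hγ0, hb]
      simp
    · rw [div_mul_eq_mul_div, mul_div_mul_right _ _ hb]
  have hwA : ∀ i j, w (i, j) * A (C i) = ENNReal.ofReal (γv i j / bv j) := by
    intro i j
    rw [hACi i, hw_def]
    dsimp only
    rw [← ENNReal.ofReal_mul (div_nonneg (hγnn i j)
      (mul_nonneg ENNReal.toReal_nonneg ENNReal.toReal_nonneg))]
    congr 1
    by_cases ha : av i = 0
    · have hγ0 : γv i j = 0 := le_antisymm (ha ▸ hγlea i j) (hγnn i j)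
      rw [hγ0, ha]
      simp
    · rw [div_mul_eq_mul_div, mul_comm (av i) (bv j), mul_div_mul_right _ _ ha]
  have hofdivA : ∀ i (sset : Set E), ENNReal.ofReal (av i / av i) * A (sset ∩ C i)
      = A (sset ∩ C i) := by
    intro i sset
    by_cases ha : av i = 0
    · have hACi0 : A (C i) = 0 := by
        have h1 : (A (C i)).toReal = 0 := ha
        rcases (ENNReal.toReal_eq_zero_iff _).mp h1 with h | h
        · exact h
        · exact absurd h (measure_ne_top A _)
      have h2 : A (sset ∩ C i) = 0 := measure_mono_null Set.inter_subset_right hACi0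
      rw [h2, mul_zero]
    · rw [div_self ha]
      simp
  have hofdivB : ∀ j (sset : Set E), ENNReal.ofReal (bv j / bv j) * B (sset ∩ C j)
      = B (sset ∩ C j) := by
    intro j sset
    by_cases hb : bv j = 0
    · have hBCj0 : B (C j) = 0 := by
        have h1 : (B (C j)).toReal = 0 := hb
        rcases (ENNReal.toReal_eq_zero_iff _).mp h1 with h | h
        · exact h
        · exact absurd h (measure_ne_top B _)
      have h2 : B (sset ∩ C j) = 0 := measure_mono_null Set.inter_subset_right hBCj0
      rw [h2, mul_zero]
    · rw [div_self hb]
      simp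
  have hΓfst : Γ.fst = A := by
    apply Measure.ext
    intro sset hsm
    rw [Measure.fst_apply hsm, hΓ_def, Measure.finset_sum_apply]
    have hterm : ∀ q : Fin n × Fin n,
        (w q • ((A.restrict (C q.1)).prod (B.restrict (C q.2)))) (Prod.fst ⁻¹' sset)
          = w q * (A (sset ∩ C q.1) * B (C q.2)) := by
      intro q
      rw [Measure.smul_apply, smul_eq_mul, hpre1, Measure.prod_prod,
        Measure.restrict_apply hsm, Measure.restrict_apply MeasurableSet.univ,
        Set.univ_inter]
    simp only [hterm]
    rw [Fintype.sum_prod_type]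
    have hinner : ∀ i, ∑ j, w (i, j) * (A (sset ∩ C i) * B (C j))
        = A (sset ∩ C i) := by
      intro i
      have : ∀ j, w (i, j) * (A (sset ∩ C i) * B (C j))
          = A (sset ∩ C i) * (w (i, j) * B (C j)) := by
        intro j
        ring
      simp only [this, hwB]
      rw [← Finset.mul_sum, ← ENNReal.ofReal_sum_of_nonneg
        (fun j _ => div_nonneg (hγnn i j) ENNReal.toReal_nonneg), ← Finset.sum_div,
        hγrow i]
      rw [mul_comm]
      exact hofdivA i sset
    simp only [hinner]
    exact (measure_partition_sum A C hCmeas hCdisj hACnull hsm).symm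
  have hΓsnd : Γ.snd = B := by
    apply Measure.ext
    intro sset hsm
    rw [Measure.snd_apply hsm, hΓ_def, Measure.finset_sum_apply]
    have hterm : ∀ q : Fin n × Fin n,
        (w q • ((A.restrict (C q.1)).prod (B.restrict (C q.2)))) (Prod.snd ⁻¹' sset)
          = w q * (A (C q.1) * B (sset ∩ C q.2)) := by
      intro q
      rw [Measure.smul_apply, smul_eq_mul, hpre2, Measure.prod_prod,
        Measure.restrict_apply MeasurableSet.univ, Measure.restrict_apply hsm,
        Set.univ_inter]
    simp only [hterm]
    rw [Fintype.sum_prod_type_right]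
    have hinner : ∀ j, ∑ i, w (i, j) * (A (C i) * B (sset ∩ C j))
        = B (sset ∩ C j) := by
      intro j
      have : ∀ i, w (i, j) * (A (C i) * B (sset ∩ C j))
          = B (sset ∩ C j) * (w (i, j) * A (C i)) := by
        intro i
        ring
      simp only [this, hwA]
      rw [← Finset.mul_sum, ← ENNReal.ofReal_sum_of_nonneg
        (fun i _ => div_nonneg (hγnn i j) ENNReal.toReal_nonneg), ← Finset.sum_div,
        hγcol j]
      rw [mul_comm]
      exact hofdivB j sset
    simp only [hinner]
    exact (measure_partition_sum B C hCmeas hCdisj hBCnull hsm).symm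
  -- integrability over product pieces
  have hprodae : ∀ q : Fin n × Fin n,
      ∀ᵐ p : E × E ∂((A.restrict (C q.1)).prod (B.restrict (C q.2))),
        (p.1 ∈ C q.1 ∧ p.1 ∈ Ω) ∧ (p.2 ∈ C q.2 ∧ p.2 ∈ Ω) := by
    intro q
    set μq := (A.restrict (C q.1)).prod (B.restrict (C q.2)) with hμq_def
    have hS : MeasurableSet (C q.1 ∩ Ω) := (hCmeas q.1).inter hΩm
    have hT : MeasurableSet (C q.2 ∩ Ω) := (hCmeas q.2).inter hΩm
    have hf0 : μq (Prod.fst ⁻¹' (C q.1 ∩ Ω)ᶜ) = 0 := by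
      rw [hμq_def, hpre1, Measure.prod_prod, Measure.restrict_apply hS.compl]
      have : A ((C q.1 ∩ Ω)ᶜ ∩ C q.1) = 0 := by
        apply densityMeasure_mono_null Ω hΩm pu
        intro x hx hxΩ
        exact hx.1 ⟨hx.2, hxΩ⟩
      rw [this, zero_mul]
    have hs0' : μq (Prod.snd ⁻¹' (C q.2 ∩ Ω)ᶜ) = 0 := by
      rw [hμq_def, hpre2, Measure.prod_prod, Measure.restrict_apply hT.compl]
      have : B ((C q.2 ∩ Ω)ᶜ ∩ C q.2) = 0 := by
        apply densityMeasure_mono_null Ω hΩm nu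
        intro x hx hxΩ
        exact hx.1 ⟨hx.2, hxΩ⟩
      rw [this, mul_zero]
    have : μq {p : E × E | ¬((p.1 ∈ C q.1 ∧ p.1 ∈ Ω) ∧ (p.2 ∈ C q.2 ∧ p.2 ∈ Ω))} = 0 := by
      refine measure_mono_null ?_ (measure_union_null hf0 hs0')
      intro p hp
      simp only [Set.mem_setOf_eq, not_and_or] at hp
      rcases hp with hp | hp
      · left
        simp only [Set.mem_preimage, Set.mem_compl_iff, Set.mem_inter_iff, not_and_or] at hp ⊢
        tauto
      · right
        simp only [Set.mem_preimage, Set.mem_compl_iff, Set.mem_inter_iff, not_and_or] at hp ⊢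
        tauto
    exact ae_iff.mpr this
  have hdint : ∀ q : Fin n × Fin n, Integrable (fun p : E × E => dist p.1 p.2)
      ((A.restrict (C q.1)).prod (B.restrict (C q.2))) := by
    intro q
    apply Integrable.mono' (integrable_const (Cb + Cb))
    · exact (continuous_fst.dist continuous_snd).aestronglyMeasurable
    · filter_upwards [hprodae q] with p hp
      rw [Real.norm_eq_abs, abs_of_nonneg dist_nonneg, dist_eq_norm]
      calc ‖p.1 - p.2‖ ≤ ‖p.1‖ + ‖p.2‖ := norm_sub_le _ _
      _ ≤ Cb + Cb := add_le_add (hCb _ hp.1.2) (hCb _ hp.2.2)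
  have hcost_q : ∀ q : Fin n × Fin n,
      ∫ p, dist p.1 p.2 ∂((A.restrict (C q.1)).prod (B.restrict (C q.2)))
        ≤ (dd q.1 q.2 + 2*δ) * (av q.1 * bv q.2) := by
    intro q
    have hμuniv : ((A.restrict (C q.1)).prod (B.restrict (C q.2))) Set.univ
        = A (C q.1) * B (C q.2) := by
      rw [← Set.univ_prod_univ, Measure.prod_prod, Measure.restrict_apply_univ,
        Measure.restrict_apply_univ]
    have hconst : ∫ (_ : E × E), (dd q.1 q.2 + 2*δ)
        ∂((A.restrict (C q.1)).prod (B.restrict (C q.2)))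
        = (dd q.1 q.2 + 2*δ) * (av q.1 * bv q.2) := by
      rw [integral_const, smul_eq_mul, measureReal_def, hμuniv, ENNReal.toReal_mul]
      ring
    rw [← hconst]
    apply integral_mono_ae (hdint q) (integrable_const _)
    filter_upwards [hprodae q] with p hp
    have h1 : dist p.1 (pt q.1) < δ := Metric.mem_ball.mp (hCball q.1 hp.1.1)
    have h2 : dist p.2 (pt q.2) < δ := Metric.mem_ball.mp (hCball q.2 hp.2.1)
    have h3 : dist p.1 p.2 ≤ dist p.1 (pt q.1) + dist (pt q.1) (pt q.2) + dist (pt q.2) p.2 :=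
      dist_triangle4 _ _ _ _
    rw [dist_comm (pt q.2) p.2] at h3
    simp only [hdd_def]
    linarith
  have hwne : ∀ q : Fin n × Fin n, w q ≠ ⊤ := fun q => ENNReal.ofReal_ne_top
  have hsmulint : ∀ q : Fin n × Fin n, Integrable (fun p : E × E => dist p.1 p.2)
      (w q • ((A.restrict (C q.1)).prod (B.restrict (C q.2)))) :=
    fun q => (hdint q).smul_measure (hwne q)
  have hwtoReal : ∀ q : Fin n × Fin n, (w q).toReal = γv q.1 q.2 / (av q.1 * bv q.2) :=
    fun q => ENNReal.toReal_ofReal (div_nonneg (hγnn _ _)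
      (mul_nonneg ENNReal.toReal_nonneg ENNReal.toReal_nonneg))
  have hterm2 : ∀ q : Fin n × Fin n,
      (γv q.1 q.2 / (av q.1 * bv q.2)) * ((dd q.1 q.2 + 2*δ) * (av q.1 * bv q.2))
        = γv q.1 q.2 * (dd q.1 q.2 + 2*δ) := by
    intro q
    by_cases h : av q.1 * bv q.2 = 0
    · rcases mul_eq_zero.mp h with h' | h'
      · have hz : γv q.1 q.2 = 0 := le_antisymm (h' ▸ hγlea _ _) (hγnn _ _)
        rw [hz, h]
        simp
      · have hz : γv q.1 q.2 = 0 := le_antisymm (h' ▸ hγleb _ _) (hγnn _ _)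
        rw [hz, h]
        simp
    · obtain ⟨ha0, hb0⟩ := mul_ne_zero_iff.mp h
      field_simp
  have hsumav : ∑ i, av i = MA := by
    have hps := measure_partition_sum A C hCmeas hCdisj hACnull MeasurableSet.univ
    simp only [Set.univ_inter] at hps
    rw [hMA_def, hps, ENNReal.toReal_sum (fun i _ => measure_ne_top A _)]
  have hΓcost : ∫ p, dist p.1 p.2 ∂Γ ≤ (∑ i, ∑ j, γv i j * dd i j) + 2*δ*MA := by
    rw [hΓ_def, integral_finset_sum_measure (fun q _ => hsmulint q)]
    have hb1 : ∀ q : Fin n × Fin n,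
        ∫ p, dist p.1 p.2 ∂(w q • ((A.restrict (C q.1)).prod (B.restrict (C q.2))))
          ≤ γv q.1 q.2 * (dd q.1 q.2 + 2*δ) := by
      intro q
      rw [integral_smul_measure, smul_eq_mul, hwtoReal q]
      calc γv q.1 q.2 / (av q.1 * bv q.2)
            * ∫ p, dist p.1 p.2 ∂((A.restrict (C q.1)).prod (B.restrict (C q.2)))
          ≤ γv q.1 q.2 / (av q.1 * bv q.2) * ((dd q.1 q.2 + 2*δ) * (av q.1 * bv q.2)) :=
            mul_le_mul_of_nonneg_left (hcost_q q) (div_nonneg (hγnn _ _)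
              (mul_nonneg ENNReal.toReal_nonneg ENNReal.toReal_nonneg))
      _ = γv q.1 q.2 * (dd q.1 q.2 + 2*δ) := hterm2 q
    calc ∑ q : Fin n × Fin n,
          ∫ p, dist p.1 p.2 ∂(w q • ((A.restrict (C q.1)).prod (B.restrict (C q.2))))
        ≤ ∑ q : Fin n × Fin n, γv q.1 q.2 * (dd q.1 q.2 + 2*δ) :=
          Finset.sum_le_sum (fun q _ => hb1 q)
    _ = (∑ i, ∑ j, γv i j * dd i j) + 2*δ * ∑ i, ∑ j, γv i j := by
        rw [Fintype.sum_prod_type]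
        have hexp : ∀ i j, γv i j * (dd i j + 2*δ) = γv i j * dd i j + 2*δ*γv i j := by
          intro i j
          ring
        simp only [hexp, Finset.sum_add_distrib, ← Finset.mul_sum]
    _ = (∑ i, ∑ j, γv i j * dd i j) + 2*δ*MA := by
        simp only [hγrow, hsumav]
  -- lower bound for discrete cost of pv
  set φ : E × E → ℝ := fun p => ∑ q : Fin n × Fin n,
    Set.indicator (C q.1 ×ˢ C q.2) (fun _ => dd q.1 q.2 - 2*δ) p with hφ_def
  have hφint : Integrable φ π := by
    apply integrable_finset_sum
    intro q _
    exact (integrable_const _).indicator ((hCmeas q.1).prod (hCmeas q.2))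
  have hφle : ∀ p : E × E, φ p ≤ dist p.1 p.2 := by
    intro p
    by_cases hp : ∃ q : Fin n × Fin n, p ∈ C q.1 ×ˢ C q.2
    · obtain ⟨q, hq⟩ := hp
      have hone : φ p = dd q.1 q.2 - 2*δ := by
        rw [hφ_def]
        dsimp only
        rw [Finset.sum_eq_single q]
        · exact Set.indicator_of_mem hq _
        · intro q' _ hne
          apply Set.indicator_of_notMem
          intro hq'
          apply hne
          have h1 : q'.1 = q.1 := by
            by_contra hcon
            exact (Set.disjoint_left.mp (hCdisj hcon)) hq'.1 hq.1
          have h2 : q'.2 = q.2 := by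
            by_contra hcon
            exact (Set.disjoint_left.mp (hCdisj hcon)) hq'.2 hq.2
          exact Prod.ext h1 h2
        · intro h
          exact absurd (Finset.mem_univ q) h
      rw [hone]
      have h1 : dist p.1 (pt q.1) < δ := Metric.mem_ball.mp (hCball q.1 hq.1)
      have h2 : dist p.2 (pt q.2) < δ := Metric.mem_ball.mp (hCball q.2 hq.2)
      have h3 : dist (pt q.1) (pt q.2)
          ≤ dist (pt q.1) p.1 + dist p.1 p.2 + dist p.2 (pt q.2) := dist_triangle4 _ _ _ _
      rw [dist_comm (pt q.1) p.1] at h3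
      simp only [hdd_def]
      linarith
    · push_neg at hp
      have hzero : φ p = 0 := by
        rw [hφ_def]
        dsimp only
        exact Finset.sum_eq_zero (fun q _ => Set.indicator_of_notMem (hp q) _)
      rw [hzero]
      exact dist_nonneg
  have hφeval : ∫ p, φ p ∂π
      = ∑ q : Fin n × Fin n, (dd q.1 q.2 - 2*δ) * pv q.1 q.2 := by
    rw [hφ_def]
    dsimp only
    rw [integral_finset_sum _ (fun q _ =>
      (integrable_const _).indicator ((hCmeas q.1).prod (hCmeas q.2)))]
    congr 1
    funext q
    rw [integral_indicator_const _ ((hCmeas q.1).prod (hCmeas q.2)), smul_eq_mul, mul_comm, measureReal_def]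
  have hsumpv : ∑ q : Fin n × Fin n, pv q.1 q.2 = Mpi := by
    have hnullq : π (⋃ q : Fin n × Fin n, C q.1 ×ˢ C q.2)ᶜ = 0 := by
      refine measure_mono_null ?_ hπU
      intro p hp
      simp only [Set.mem_compl_iff, Set.mem_iUnion, not_exists] at hp
      simp only [Set.mem_setOf_eq]
      rintro ⟨h1, h2⟩
      rw [hU_def] at h1 h2
      obtain ⟨i, hi⟩ := Set.mem_iUnion.mp h1
      obtain ⟨j, hj⟩ := Set.mem_iUnion.mp h2
      exact hp (i, j) ⟨hi, hj⟩
    have hdisjq : Pairwise (Function.onFun Disjoint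
        (fun q : Fin n × Fin n => C q.1 ×ˢ C q.2)) := by
      intro q q' hne
      have hc : q.1 ≠ q'.1 ∨ q.2 ≠ q'.2 := by
        by_contra hcon
        push_neg at hcon
        exact hne (Prod.ext hcon.1 hcon.2)
      rcases hc with h | h
      · exact Set.disjoint_left.mpr fun p hp hp' =>
          (Set.disjoint_left.mp (hCdisj h)) hp.1 hp'.1
      · exact Set.disjoint_left.mpr fun p hp hp' =>
          (Set.disjoint_left.mp (hCdisj h)) hp.2 hp'.2
    have hps := measure_partition_sum π (fun q : Fin n × Fin n => C q.1 ×ˢ C q.2)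
      (fun q => (hCmeas q.1).prod (hCmeas q.2)) hdisjq hnullq MeasurableSet.univ
    simp only [Set.univ_inter] at hps
    rw [hMpi_def, hps, ENNReal.toReal_sum (fun q _ => measure_ne_top π _)]
  have hpvcost : (∑ i, ∑ j, pv i j * dd i j) ≤ (∫ p, dist p.1 p.2 ∂π) + 2*δ*Mpi := by
    have h1 : ∫ p, φ p ∂π ≤ ∫ p, dist p.1 p.2 ∂π := integral_mono hφint hdπ hφle
    rw [hφeval] at h1
    have h2 : ∑ q : Fin n × Fin n, (dd q.1 q.2 - 2*δ) * pv q.1 q.2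
        = (∑ i, ∑ j, pv i j * dd i j) - 2*δ * ∑ q : Fin n × Fin n, pv q.1 q.2 := by
      have hexp : ∀ q : Fin n × Fin n, (dd q.1 q.2 - 2*δ) * pv q.1 q.2
          = pv q.1 q.2 * dd q.1 q.2 - 2*δ*pv q.1 q.2 := by
        intro q
        ring
      simp only [hexp, Finset.sum_sub_distrib, ← Finset.mul_sum]
      rw [Fintype.sum_prod_type]
    rw [h2, hsumpv] at h1
    linarith
  -- conclusion
  have hEMDle : EMD Ω pu nu ≤ ∫ p, dist p.1 p.2 ∂Γ := by
    apply EMD_le_cost Ω pu nu Γ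
    · rw [hΓfst, hA_def]
    · rw [hΓsnd, hB_def]
  have hπsplit : ∫ p, dist p.1 p.2 ∂π
      = (∫ p, dist p.1 p.2 ∂π₁) + ∫ p, dist p.1 p.2 ∂π₂ := by
    rw [hπ_def, integral_add_measure hd1 hd2]
  have hδb : 2*δ*MA + 2*δ*Mpi ≤ ε/2 := by
    have hden : (0:ℝ) < 4*(MA+Mpi)+1 := by nlinarith
    have h2δ : δ * (4*(MA+Mpi)+1) = ε := div_mul_cancel₀ ε (ne_of_gt hden)
    nlinarith [hδpos.le, hMA0, hMpi0]
  have hγd : (∑ i, ∑ j, γv i j * dd i j) ≤ ∑ i, ∑ j, pv i j * dd i j := hγcost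
  linarith [hπ₁c, hπ₂c, hEMDle, hΓcost, hpvcost]

end Core

section Final

variable {d : ℕ}

local notation "E" => EuclideanSpace ℝ (Fin d)

lemma densityMeasure_of_zero (Ω : Set E) (h : volume Ω = 0) (u : E → ℝ) :
    densityMeasure Ω u = 0 := by
  unfold densityMeasure
  rw [Measure.restrict_eq_zero.mpr h]
  ext sset hsm
  rw [withDensity_apply _ hsm]
  simp

theorem struc_seminorm' (Ω : Set (EuclideanSpace ℝ (Fin d)))
    (hΩc : IsCompact Ω) (hΩconv : Convex ℝ Ω) :
    (∀ f : EuclideanSpace ℝ (Fin d) → ℝ, IntegrableOn f Ω → 0 ≤ struc Ω f) ∧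
    (∀ f : EuclideanSpace ℝ (Fin d) → ℝ, IntegrableOn f Ω → ∀ l : ℝ,
      struc Ω (fun x => l * f x) = |l| * struc Ω f) ∧
    (∀ f g : EuclideanSpace ℝ (Fin d) → ℝ, IntegrableOn f Ω → IntegrableOn g Ω →
      struc Ω (fun x => f x + g x) ≤ struc Ω f + struc Ω g) := by
  refine ⟨fun f _ => struc_nonneg Ω f, fun f hf l => struc_smul Ω f hf l, ?_⟩
  intro f g hf hg
  by_cases hvol : volume Ω = 0
  · have hz : ∀ u : E → ℝ, struc Ω u = 0 := by
      intro u
      unfold struc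
      exact EMD_zero_of_zero Ω _ _ (densityMeasure_of_zero Ω hvol _)
        (densityMeasure_of_zero Ω hvol _)
    rw [hz, hz, hz]
    norm_num
  -- measurable representatives
  obtain ⟨f', hf'meas, haef⟩ :
      ∃ f' : E → ℝ, Measurable f' ∧ f =ᵐ[volume.restrict Ω] f' := by
    have h := hf.aestronglyMeasurable.aemeasurable
    exact ⟨h.mk f, h.measurable_mk, h.ae_eq_mk⟩
  obtain ⟨g', hg'meas, haeg⟩ :
      ∃ g' : E → ℝ, Measurable g' ∧ g =ᵐ[volume.restrict Ω] g' := by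
    have h := hg.aestronglyMeasurable.aemeasurable
    exact ⟨h.mk g, h.measurable_mk, h.ae_eq_mk⟩
  have hf' : IntegrableOn f' Ω := hf.congr haef
  have hg' : IntegrableOn g' Ω := hg.congr haeg
  rw [struc_congr Ω haef, struc_congr Ω haeg,
    struc_congr (f := fun x => f x + g x) (f' := fun x => f' x + g' x) Ω (haef.add haeg :
      (fun x => f x + g x) =ᵐ[volume.restrict Ω] fun x => f' x + g' x)]
  have hvolfin : volume Ω ≠ ⊤ := hΩc.measure_lt_top.ne
  set c : ℝ := meanOn Ω f' with hc_def
  set c' : ℝ := meanOn Ω g' with hc'_def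
  set s : E → ℝ := fun x => f' x - c with hs_def
  set t : E → ℝ := fun x => g' x - c' with ht_def
  have hfinres : IsFiniteMeasure (volume.restrict Ω) := by
    constructor
    rw [Measure.restrict_apply_univ]
    exact lt_top_iff_ne_top.mpr hvolfin
  have hsm : Measurable s := hf'meas.sub measurable_const
  have htm : Measurable t := hg'meas.sub measurable_const
  have hsi : IntegrableOn s Ω := hf'.sub (integrable_const c)
  have hti : IntegrableOn t Ω := hg'.sub (integrable_const c')
  have hs0 : ∫ x in Ω, s x = 0 := integral_sub_mean Ω hvol hvolfin hf'
  have ht0 : ∫ x in Ω, t x = 0 := integral_sub_mean Ω hvol hvolfin hg'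
  have hcore := EMD_triangle_core Ω hΩc s t hsm htm hsi hti hs0 ht0
  -- identify the three struc values
  have e0 : struc Ω (fun x => f' x + g' x)
      = EMD Ω (fun x => max (s x + t x) 0) (fun x => max (-(s x + t x)) 0) := by
    unfold struc
    rw [meanOn_add Ω hf' hg', ← hc_def, ← hc'_def]
    have e1 : (fun x => max (f' x + g' x - (c + c')) 0)
        = fun x => max (s x + t x) 0 := by
      funext x
      simp only [hs_def, ht_def]
      congr 1
      ring
    have e2 : (fun x => max (c + c' - (f' x + g' x)) 0)
        = fun x => max (-(s x + t x)) 0 := by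
      funext x
      simp only [hs_def, ht_def]
      congr 1
      ring
    rw [e1, e2]
  have e3 : struc Ω f' = EMD Ω (fun x => max (s x) 0) (fun x => max (-s x) 0) := by
    unfold struc
    rw [← hc_def]
    have e4 : (fun x => max (c - f' x) 0) = fun x => max (-s x) 0 := by
      funext x
      simp only [hs_def]
      congr 1
      ring
    rw [e4]
  have e5 : struc Ω g' = EMD Ω (fun x => max (t x) 0) (fun x => max (-t x) 0) := by
    unfold struc
    rw [← hc'_def]
    have e6 : (fun x => max (c' - g' x) 0) = fun x => max (-t x) 0 := by
      funext x
      simp only [ht_def]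
      congr 1
      ring
    rw [e6]
  rw [e0, e3, e5]
  exact hcore

end Final

/-- The structure functional is a semi-norm on L¹(Ω): nonnegative, absolutely
homogeneous, and satisfies the triangle inequality. -/
theorem struc_seminorm {d : ℕ} (Ω : Set (EuclideanSpace ℝ (Fin d)))
    (hΩc : IsCompact Ω) (hΩconv : Convex ℝ Ω) :
    (∀ f : EuclideanSpace ℝ (Fin d) → ℝ, IntegrableOn f Ω → 0 ≤ struc Ω f) ∧
    (∀ f : EuclideanSpace ℝ (Fin d) → ℝ, IntegrableOn f Ω → ∀ l : ℝ,
      struc Ω (fun x => l * f x) = |l| * struc Ω f) ∧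
    (∀ f g : EuclideanSpace ℝ (Fin d) → ℝ, IntegrableOn f Ω → IntegrableOn g Ω →
      struc Ω (fun x => f x + g x) ≤ struc Ω f + struc Ω g) := by
  exact struc_seminorm' Ω hΩc hΩconv
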